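/- In the logistic setting, suppose θ* minimizes the risk L. For any η > 0 and any θ ∈ ℝ^d: if L(θ) − L(θ*) > η, then ‖∇L(θ)‖ ≥ Λ_min·√η / ( √2·D_X·(1 + e^{D_X(‖θ*‖ + √(8η/D_X²))}) ), where ∇L(θ) = E[ −y·X/(1 + e^{y·θᵀX}) ] is the gradient of L at θ. -/

import Mathlib

/-!
The logistic loss `ℓ u = log (1 + e^{-u})` is convex with `ℓ'' = σ (1 - σ) ≤ 1/4`, and
`ℓ'' ≥ 1 / (2κ)` on `[-D_X r, D_X r]`, where `κ = 1 + e^{D_X r}`. As `|y θᵀX| ≤ D_X ‖θ‖`, the risk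
is smooth everywhere and `Λ_min / (2κ)`-strongly convex on the ball of radius
`r = ‖θ*‖ + ρ`, `ρ = √(8η / D_X²)`. Smoothness and minimality force `∇L(θ*) = 0`, so `L` grows
quadratically within distance `ρ` of `θ*`, and convexity along the segment from `θ*` to `θ`
propagates this to `L θ - L θ* ≥ Λ_min / (4κ) · min t ρ · t`, `t = ‖θ - θ*‖`. Together with
`L θ - L θ* ≤ ‖∇L(θ)‖ t` this gives `‖∇L(θ)‖ ≥ Λ_min ρ / (4κ)` when `t ≥ ρ`, which is the claimed
bound, and `‖∇L(θ)‖² ≥ Λ_min η / (4κ)` when `t < ρ`, which is larger because `Λ_min ≤ D_X²`.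
-/

open MeasureTheory ProbabilityTheory Matrix Real
open scoped ENNReal

/-- The smallest eigenvalue of a (symmetric) matrix. -/
noncomputable def lambdaMin {d : ℕ} (M : Matrix (Fin d) (Fin d) ℝ) : ℝ :=
  sInf {r : ℝ | ∃ v : Fin d → ℝ, v ≠ 0 ∧ M.mulVec v = r • v}

/-- The Euclidean norm of a vector of `Fin d → ℝ`. -/
noncomputable def euclNorm {d : ℕ} (v : Fin d → ℝ) : ℝ :=
  Real.sqrt (∑ i, v i ^ 2)

open Set

theorem ConvexOn.add_mul_sub_le_of_hasDerivAt {S : Set ℝ} {f : ℝ → ℝ} {f' a b : ℝ}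
    (hf : ConvexOn ℝ S f) (ha : a ∈ S) (hb : b ∈ S) (hderiv : HasDerivAt f f' a) :
    f a + f' * (b - a) ≤ f b := by
  rcases lt_trichotomy a b with hab | rfl | hab
  · have h := hf.le_slope_of_hasDerivAt ha hb hab hderiv
    rw [slope_def_field, le_div_iff₀ (sub_pos.2 hab)] at h
    linarith
  · simp
  · have h := hf.slope_le_of_hasDerivAt hb ha hab hderiv
    rw [slope_def_field, div_le_iff₀ (sub_pos.2 hab)] at h
    linarith

theorem half_mul_sq_le_sub_sub_mul {S : Set ℝ} (hS : Convex ℝ S) {f f' f'' : ℝ → ℝ} {m : ℝ}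
    (hf : ∀ x ∈ S, HasDerivAt f (f' x) x) (hf' : ∀ x ∈ S, HasDerivAt f' (f'' x) x)
    (hm : ∀ x ∈ S, m ≤ f'' x) {a b : ℝ} (ha : a ∈ S) (hb : b ∈ S) :
    m / 2 * (b - a) ^ 2 ≤ f b - f a - f' a * (b - a) := by
  have hg : ∀ x ∈ S, HasDerivAt (fun x => f x - m / 2 * x ^ 2) (f' x - m * x) x := fun x hx =>
    ((hf x hx).sub ((hasDerivAt_pow 2 x).const_mul (m / 2))).congr_deriv (by ring)
  have hg' : ∀ x ∈ S, HasDerivAt (fun x => f' x - m * x) (f'' x - m) x := fun x hx =>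
    ((hf' x hx).sub ((hasDerivAt_id x).const_mul m)).congr_deriv (by simp)
  have hconv : ConvexOn ℝ S (fun x => f x - m / 2 * x ^ 2) :=
    convexOn_of_hasDerivWithinAt2_nonneg hS
      (fun x hx => (hg x hx).continuousAt.continuousWithinAt)
      (fun x hx => (hg x (interior_subset hx)).hasDerivWithinAt)
      (fun x hx => (hg' x (interior_subset hx)).hasDerivWithinAt)
      (fun x hx => sub_nonneg.2 (hm x (interior_subset hx)))
  have := hconv.add_mul_sub_le_of_hasDerivAt ha hb (hg a ha)
  linarith

theorem sub_sub_mul_le_half_mul_sq {S : Set ℝ} (hS : Convex ℝ S) {f f' f'' : ℝ → ℝ} {M : ℝ}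
    (hf : ∀ x ∈ S, HasDerivAt f (f' x) x) (hf' : ∀ x ∈ S, HasDerivAt f' (f'' x) x)
    (hM : ∀ x ∈ S, f'' x ≤ M) {a b : ℝ} (ha : a ∈ S) (hb : b ∈ S) :
    f b - f a - f' a * (b - a) ≤ M / 2 * (b - a) ^ 2 := by
  have := half_mul_sq_le_sub_sub_mul hS (f := -f) (f' := -f') (f'' := -f'') (m := -M)
    (fun x hx => (hf x hx).neg) (fun x hx => (hf' x hx).neg) (fun x hx => neg_le_neg (hM x hx))
    ha hb
  simp only [Pi.neg_apply] at this
  linarith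

noncomputable def logisticLoss (u : ℝ) : ℝ := log (1 + exp (-u))

theorem hasDerivAt_logisticLoss (u : ℝ) : HasDerivAt logisticLoss (sigmoid u - 1) u := by
  have h : HasDerivAt logisticLoss (exp (-u) * -1 / (1 + exp (-u))) u :=
    (((hasDerivAt_neg u).exp).const_add 1).log (by positivity)
  convert h using 1
  rw [sigmoid_def]
  field_simp
  ring

theorem sigmoid_sub_one (u : ℝ) : sigmoid u - 1 = -(1 + exp u)⁻¹ := by
  rw [← neg_sub, ← sigmoid_neg, sigmoid_def, neg_neg]

theorem sigmoid_mul_one_sub_le (u : ℝ) : sigmoid u * (1 - sigmoid u) ≤ 1 / 4 := by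
  nlinarith [sq_nonneg (sigmoid u - 1 / 2)]

theorem inv_two_mul_le_sigmoid_mul_one_sub {u R : ℝ} (hu : |u| ≤ R) :
    (2 * (1 + exp R))⁻¹ ≤ sigmoid u * (1 - sigmoid u) := by
  rw [← sigmoid_neg, sigmoid_def, sigmoid_def, neg_neg, ← mul_inv]
  apply inv_anti₀ (by positivity)
  have h₁ : exp u ≤ exp R := exp_le_exp.2 (le_of_abs_le hu)
  have h₂ : exp (-u) ≤ exp R := exp_le_exp.2 ((neg_le_abs u).trans hu)
  have h : exp (-u) * exp u = 1 := by rw [← exp_add, neg_add_cancel, exp_zero]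
  nlinarith

theorem convexOn_logisticLoss : ConvexOn ℝ univ logisticLoss :=
  convexOn_of_hasDerivWithinAt2_nonneg convex_univ
    (fun x _ => (hasDerivAt_logisticLoss x).continuousAt.continuousWithinAt)
    (fun x _ => (hasDerivAt_logisticLoss x).hasDerivWithinAt)
    (fun x _ => ((hasDerivAt_sigmoid x).sub_const 1).hasDerivWithinAt)
    (fun x _ => mul_nonneg (sigmoid_nonneg x) (sub_nonneg.2 (sigmoid_le_one x)))

theorem logisticLoss_sub_sub_nonneg (a b : ℝ) :
    0 ≤ logisticLoss b - logisticLoss a - (sigmoid a - 1) * (b - a) := by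
  have := convexOn_logisticLoss.add_mul_sub_le_of_hasDerivAt (mem_univ a) (mem_univ b)
    (hasDerivAt_logisticLoss a)
  linarith

theorem logisticLoss_sub_sub_le (a b : ℝ) :
    logisticLoss b - logisticLoss a - (sigmoid a - 1) * (b - a) ≤ (b - a) ^ 2 / 8 := by
  have := sub_sub_mul_le_half_mul_sq convex_univ (fun x _ => hasDerivAt_logisticLoss x)
    (fun x _ => (hasDerivAt_sigmoid x).sub_const 1) (fun x _ => sigmoid_mul_one_sub_le x)
    (mem_univ a) (mem_univ b)
  linarith

theorem le_logisticLoss_sub_sub {a b R : ℝ} (ha : |a| ≤ R) (hb : |b| ≤ R) :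
    (4 * (1 + exp R))⁻¹ * (b - a) ^ 2
      ≤ logisticLoss b - logisticLoss a - (sigmoid a - 1) * (b - a) := by
  have := half_mul_sq_le_sub_sub_mul (convex_Icc (-R) R)
    (fun x _ => hasDerivAt_logisticLoss x) (fun x _ => (hasDerivAt_sigmoid x).sub_const 1)
    (fun x hx => inv_two_mul_le_sigmoid_mul_one_sub (abs_le.2 hx))
    (abs_le.1 ha) (abs_le.1 hb)
  convert this using 2
  field_simp
  ring

section EuclideanNorm

variable {d : ℕ}

theorem euclNorm_eq_norm (v : Fin d → ℝ) : euclNorm v = ‖WithLp.toLp 2 v‖ := by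
  simp [euclNorm, EuclideanSpace.norm_eq]

theorem dotProduct_eq_inner (v w : Fin d → ℝ) :
    v ⬝ᵥ w = inner ℝ (WithLp.toLp 2 v) (WithLp.toLp 2 w) := by
  simp [EuclideanSpace.inner_eq_star_dotProduct, dotProduct_comm]

theorem euclNorm_nonneg (v : Fin d → ℝ) : 0 ≤ euclNorm v := sqrt_nonneg _

theorem euclNorm_sq (v : Fin d → ℝ) : euclNorm v ^ 2 = v ⬝ᵥ v := by
  rw [euclNorm_eq_norm, dotProduct_eq_inner, real_inner_self_eq_norm_sq]

theorem euclNorm_eq_zero {v : Fin d → ℝ} : euclNorm v = 0 ↔ v = 0 := by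
  rw [euclNorm_eq_norm, norm_eq_zero, WithLp.toLp_eq_zero]

theorem euclNorm_pos {v : Fin d → ℝ} (hv : v ≠ 0) : 0 < euclNorm v :=
  (euclNorm_nonneg v).lt_of_ne' (mt euclNorm_eq_zero.1 hv)

theorem abs_dotProduct_le (v w : Fin d → ℝ) : |v ⬝ᵥ w| ≤ euclNorm v * euclNorm w := by
  rw [dotProduct_eq_inner, euclNorm_eq_norm, euclNorm_eq_norm]
  exact abs_real_inner_le_norm _ _

theorem euclNorm_add_le (v w : Fin d → ℝ) : euclNorm (v + w) ≤ euclNorm v + euclNorm w := by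
  simpa only [euclNorm_eq_norm, WithLp.toLp_add] using norm_add_le _ _

theorem euclNorm_smul (c : ℝ) (v : Fin d → ℝ) : euclNorm (c • v) = |c| * euclNorm v := by
  rw [euclNorm_eq_norm, euclNorm_eq_norm, WithLp.toLp_smul, norm_smul, Real.norm_eq_abs]

theorem abs_apply_le_euclNorm (v : Fin d → ℝ) (i : Fin d) : |v i| ≤ euclNorm v := by
  simpa [euclNorm_eq_norm] using PiLp.norm_apply_le (WithLp.toLp 2 v) i

theorem lambdaMin_mul_euclNorm_sq_le {M : Matrix (Fin d) (Fin d) ℝ} (hM : M.IsHermitian)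
    (v : Fin d → ℝ) : lambdaMin M * euclNorm v ^ 2 ≤ v ⬝ᵥ M *ᵥ v := by
  rcases eq_or_ne v 0 with rfl | hv
  · simp [euclNorm_eq_zero.2 rfl]
  let T := M.toEuclideanLin
  have hquad : ∀ u : Fin d → ℝ, inner ℝ (T (WithLp.toLp 2 u)) (WithLp.toLp 2 u) = u ⬝ᵥ M *ᵥ u :=
    fun u => (dotProduct_eq_inner _ _).symm.trans (dotProduct_comm _ _)
  have : Nontrivial (EuclideanSpace ℝ (Fin d)) :=
    nontrivial_of_ne (WithLp.toLp 2 v) 0 (by simpa using hv)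
  set μ₀ := ⨅ x : {x : EuclideanSpace ℝ (Fin d) // x ≠ 0},
    RCLike.re (inner ℝ (T x) x) / ‖(x : EuclideanSpace ℝ (Fin d))‖ ^ 2
  -- the infimum `μ₀` of the Rayleigh quotient is an eigenvalue and bounds all eigenvalues below
  have hμ₀ : ∀ u : Fin d → ℝ, u ≠ 0 → μ₀ * euclNorm u ^ 2 ≤ u ⬝ᵥ M *ᵥ u := by
    intro u hu
    have hbdd : BddBelow (Set.range fun x : {x : EuclideanSpace ℝ (Fin d) // x ≠ 0} =>
        RCLike.re (inner ℝ (T x) x) / ‖(x : EuclideanSpace ℝ (Fin d))‖ ^ 2) :=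
      ⟨-‖LinearMap.toContinuousLinearMap T‖, by
        rintro _ ⟨x, rfl⟩
        exact neg_le_of_abs_le ((LinearMap.toContinuousLinearMap T).rayleighQuotient_le_norm x)⟩
    have hu' : WithLp.toLp 2 u ≠ 0 := by simpa using hu
    have h : μ₀ ≤ RCLike.re (inner ℝ (T (WithLp.toLp 2 u)) (WithLp.toLp 2 u))
        / ‖WithLp.toLp 2 u‖ ^ 2 := ciInf_le hbdd ⟨_, hu'⟩
    rwa [RCLike.re_to_real, hquad, le_div_iff₀ (by positivity), ← euclNorm_eq_norm] at h
  have hlow : lambdaMin M ≤ μ₀ := by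
    obtain ⟨w, hw⟩ := (isSymmetric_toEuclideanLin_iff.2 hM).hasEigenvalue_iInf_of_finiteDimensional
      |>.exists_hasEigenvector
    refine csInf_le ⟨μ₀, ?_⟩ ⟨w.ofLp, by simpa using hw.2, congrArg WithLp.ofLp hw.apply_eq_smul⟩
    rintro r ⟨u, hu, hMu⟩
    have h := hμ₀ u hu
    rw [hMu, dotProduct_smul, smul_eq_mul, ← euclNorm_sq] at h
    exact le_of_mul_le_mul_right h (pow_pos (euclNorm_pos hu) 2)
  calc lambdaMin M * euclNorm v ^ 2 ≤ μ₀ * euclNorm v ^ 2 := by gcongr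
    _ ≤ v ⬝ᵥ M *ᵥ v := hμ₀ v hv

theorem eq_zero_of_forall_le_add_dotProduct_add_mul {f : (Fin d → ℝ) → ℝ}
    {x g : Fin d → ℝ} {C : ℝ} (hC : 0 ≤ C) (hmin : ∀ z, f x ≤ f z)
    (hsmooth : ∀ z, f z ≤ f x + g ⬝ᵥ (z - x) + C * euclNorm (z - x) ^ 2) : g = 0 := by
  -- a gradient step of length `s = (2C + 2)⁻¹` would decrease `f` by at least `s ‖g‖² / 2`
  have h := (hmin _).trans (hsmooth (x - (2 * C + 2)⁻¹ • g))
  simp only [sub_sub_cancel_left, euclNorm_sq, dotProduct_neg, neg_dotProduct, dotProduct_smul,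
    smul_dotProduct, smul_eq_mul] at h
  have hgg : g ⬝ᵥ g ≤ 0 := by
    field_simp at h
    nlinarith
  rw [← euclNorm_sq] at hgg
  exact euclNorm_eq_zero.1 (pow_eq_zero_iff two_ne_zero |>.1 (le_antisymm hgg (sq_nonneg _)))

theorem ConvexOn.mul_min_mul_le_sub {f : (Fin d → ℝ) → ℝ} (hf : ConvexOn ℝ univ f)
    {x₀ : Fin d → ℝ} {a ρ : ℝ} (hρ : 0 < ρ)
    (hgrowth : ∀ x, euclNorm (x - x₀) ≤ ρ → a * euclNorm (x - x₀) ^ 2 ≤ f x - f x₀)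
    (x : Fin d → ℝ) :
    a * min (euclNorm (x - x₀)) ρ * euclNorm (x - x₀) ≤ f x - f x₀ := by
  rcases (euclNorm_nonneg (x - x₀)).eq_or_lt with ht | ht
  · have := hgrowth x (ht ▸ hρ.le)
    rw [← ht] at this ⊢
    simpa using this
  set t := euclNorm (x - x₀)
  -- compare with the point at distance `min t ρ` from `x₀` on the segment towards `x`
  set s := min t ρ
  have hs : 0 < s := lt_min ht hρ
  set l := s / t
  have hl : 0 ≤ l := by positivity
  have hdist : euclNorm (x₀ + l • (x - x₀) - x₀) = s := by
    rw [add_sub_cancel_left, euclNorm_smul, abs_of_nonneg hl, div_mul_cancel₀ _ ht.ne']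
  have hgrow := hgrowth _ (hdist.le.trans (min_le_right t ρ))
  have hconv : f (x₀ + l • (x - x₀)) ≤ (1 - l) * f x₀ + l * f x := by
    have h := hf.2 (mem_univ x₀) (mem_univ x)
      (sub_nonneg.2 (div_le_one_of_le₀ (min_le_left t ρ) ht.le)) hl (by ring)
    rwa [show (1 - l) • x₀ + l • x = x₀ + l • (x - x₀) by module, smul_eq_mul, smul_eq_mul] at h
  rw [hdist] at hgrow
  have key : s * (a * s * t) ≤ s * (f x - f x₀) := by
    have : a * s ^ 2 ≤ s / t * (f x - f x₀) := by linarith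
    rw [div_mul_eq_mul_div, le_div_iff₀ ht] at this
    linarith
  exact le_of_mul_le_mul_left key hs

end EuclideanNorm

theorem min_mul_sqrt_le {g t η a ρ : ℝ} (ha : 0 ≤ a) (ht : 0 < t) (hη : η ≤ g * t)
    (hlower : a * min t ρ * t ≤ g * t) : min (a * ρ) (√(a * η)) ≤ g := by
  have hg : a * min t ρ ≤ g := le_of_mul_le_mul_right hlower ht
  rcases le_total ρ t with hρt | htρ
  · rw [min_eq_right hρt] at hg
    exact (min_le_left _ _).trans hg
  · rw [min_eq_left htρ] at hg
    have hg0 : 0 ≤ g := (mul_nonneg ha ht.le).trans hg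
    refine (min_le_right _ _).trans ((sqrt_le_left hg0).2 ?_)
    calc a * η ≤ a * (g * t) := mul_le_mul_of_nonneg_left hη ha
      _ = g * (a * t) := by ring
      _ ≤ g ^ 2 := by rw [sq]; exact mul_le_mul_of_nonneg_left hg hg0

theorem div_le_min_mul_sqrt {Λ D κ η : ℝ} (hΛ : 0 ≤ Λ) (hΛD : Λ ≤ D ^ 2) (hD : 0 < D)
    (hκ : 2 ≤ κ) (hη : 0 ≤ η) :
    Λ * √η / (√2 * D * κ) ≤ min (Λ / (4 * κ) * √(8 * η / D ^ 2)) (√(Λ / (4 * κ) * η)) := by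
  have h2 : √2 ^ 2 = 2 := sq_sqrt zero_le_two
  have h8 : √(8 * η / D ^ 2) = 2 * √2 * √η / D := by
    rw [sqrt_div' _ (sq_nonneg D), sqrt_sq hD.le, sqrt_mul' _ hη,
      show (8 : ℝ) = 2 ^ 2 * 2 by norm_num, sqrt_mul' _ zero_le_two, sqrt_sq zero_le_two]
  refine le_min (le_of_eq ?_) ((le_sqrt (by positivity) (by positivity)).2 ?_)
  · rw [h8]
    field_simp
    rw [h2]
    ring
  · rw [div_pow, mul_pow, mul_pow, mul_pow, h2, sq_sqrt hη, div_le_iff₀ (by positivity)]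
    have : Λ * 2 ≤ D ^ 2 * κ := by nlinarith
    field_simp
    nlinarith [mul_le_mul_of_nonneg_left this (by positivity : 0 ≤ Λ * η * κ)]

section LogisticRegression

variable {Ω : Type*} [MeasurableSpace Ω] {μ : Measure Ω} {d : ℕ} {X : Ω → Fin d → ℝ} {y : Ω → ℝ}
  {D : ℝ}

variable (μ X y) in
noncomputable def logisticRisk (θ : Fin d → ℝ) : ℝ := ∫ ω, logisticLoss (y ω * (θ ⬝ᵥ X ω)) ∂μ

variable (μ X y) in
noncomputable def logisticGrad (θ : Fin d → ℝ) : Fin d → ℝ :=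
  fun i => ∫ ω, -(y ω) * X ω i / (1 + exp (y ω * (θ ⬝ᵥ X ω))) ∂μ

variable (μ X) in
noncomputable def secondMomentMatrix : Matrix (Fin d) (Fin d) ℝ :=
  Matrix.of fun i j => ∫ ω, X ω i * X ω j ∂μ

theorem secondMomentMatrix_isHermitian : (secondMomentMatrix μ X).IsHermitian := by
  ext i j
  simp only [secondMomentMatrix, conjTranspose_apply, of_apply, star_trivial, mul_comm]

variable (μ X y D) in
structure LogisticSetting : Prop where
  measurable_X : Measurable X
  measurable_y : Measurable y
  abs_y : ∀ᵐ ω ∂μ, |y ω| = 1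
  euclNorm_X_le : ∀ᵐ ω ∂μ, euclNorm (X ω) ≤ D

namespace LogisticSetting

variable (h : LogisticSetting μ X y D)
include h

theorem abs_dotProduct_le (θ : Fin d → ℝ) : ∀ᵐ ω ∂μ, |θ ⬝ᵥ X ω| ≤ euclNorm θ * D := by
  filter_upwards [h.euclNorm_X_le] with ω hω
  exact (_root_.abs_dotProduct_le θ (X ω)).trans (mul_le_mul_of_nonneg_left hω (euclNorm_nonneg θ))

theorem abs_apply_le (i : Fin d) : ∀ᵐ ω ∂μ, |X ω i| ≤ D := by
  filter_upwards [h.euclNorm_X_le] with ω hω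
  exact (abs_apply_le_euclNorm (X ω) i).trans hω

section FiniteMeasure

variable [IsFiniteMeasure μ]

theorem integrable_logisticLoss (θ : Fin d → ℝ) :
    Integrable (fun ω => logisticLoss (y ω * (θ ⬝ᵥ X ω))) μ := by
  have := h.measurable_X; have := h.measurable_y
  refine .of_bound (by unfold logisticLoss; fun_prop : Measurable _).aestronglyMeasurable
    (log (1 + exp (euclNorm θ * D))) ?_
  filter_upwards [h.abs_y, h.abs_dotProduct_le θ] with ω hy hθ
  have hpos : 0 ≤ logisticLoss (y ω * (θ ⬝ᵥ X ω)) :=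
    log_nonneg (le_add_of_nonneg_right (exp_nonneg _))
  rw [norm_of_nonneg hpos, logisticLoss]
  gcongr
  calc -(y ω * (θ ⬝ᵥ X ω)) ≤ |y ω * (θ ⬝ᵥ X ω)| := neg_le_abs _
    _ ≤ euclNorm θ * D := by rwa [abs_mul, hy, one_mul]

theorem integrable_logisticGrad_integrand (θ : Fin d → ℝ) (i : Fin d) :
    Integrable (fun ω => -(y ω) * X ω i / (1 + exp (y ω * (θ ⬝ᵥ X ω)))) μ := by
  have := h.measurable_X; have := h.measurable_y
  refine .of_bound (by fun_prop : Measurable _).aestronglyMeasurable D ?_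
  filter_upwards [h.abs_y, h.abs_apply_le i] with ω hy hX
  rw [norm_div, norm_mul, norm_neg, Real.norm_eq_abs, Real.norm_eq_abs, hy, one_mul,
    Real.norm_of_nonneg (by positivity)]
  exact (div_le_self (abs_nonneg _) (le_add_of_nonneg_right (exp_nonneg _))).trans hX

theorem integrable_dotProduct_sq (v : Fin d → ℝ) : Integrable (fun ω => (v ⬝ᵥ X ω) ^ 2) μ := by
  have := h.measurable_X
  refine .of_bound (by fun_prop) ((euclNorm v * D) ^ 2) ?_
  filter_upwards [h.abs_dotProduct_le v] with ω hv
  rw [Real.norm_eq_abs, abs_pow]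
  exact pow_le_pow_left₀ (abs_nonneg _) hv 2

theorem integrable_mul_apply (i j : Fin d) : Integrable (fun ω => X ω i * X ω j) μ := by
  have := h.measurable_X
  refine .of_bound (by fun_prop) (D * D) ?_
  filter_upwards [h.abs_apply_le i, h.abs_apply_le j] with ω hi hj
  rw [Real.norm_eq_abs, abs_mul]
  exact mul_le_mul hi hj (abs_nonneg _) ((abs_nonneg _).trans hi)

theorem integrable_sigmoid_sub_one_mul (θ v : Fin d → ℝ) :
    Integrable (fun ω => (sigmoid (y ω * (θ ⬝ᵥ X ω)) - 1) * (y ω * (v ⬝ᵥ X ω))) μ := by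
  have := h.measurable_X; have := h.measurable_y
  refine .of_bound (by fun_prop : Measurable _).aestronglyMeasurable (euclNorm v * D) ?_
  filter_upwards [h.abs_y, h.abs_dotProduct_le v] with ω hy hv
  rw [norm_mul, norm_mul, Real.norm_eq_abs, Real.norm_eq_abs, hy, one_mul, Real.norm_eq_abs,
    abs_sub_comm, abs_of_nonneg (sub_nonneg.2 (sigmoid_le_one _))]
  exact (mul_le_of_le_one_left (abs_nonneg _) (sub_le_self _ (sigmoid_nonneg _))).trans hv

theorem logisticGrad_dotProduct (θ v : Fin d → ℝ) :
    logisticGrad μ X y θ ⬝ᵥ v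
      = ∫ ω, (sigmoid (y ω * (θ ⬝ᵥ X ω)) - 1) * (y ω * (v ⬝ᵥ X ω)) ∂μ := by
  rw [dotProduct]
  simp only [logisticGrad, ← integral_mul_const]
  rw [← integral_finsetSum _ fun i _ => (h.integrable_logisticGrad_integrand θ i).mul_const _]
  congr 1 with ω
  rw [sigmoid_sub_one, dotProduct.eq_1 v, Finset.mul_sum, Finset.mul_sum]
  refine Finset.sum_congr rfl fun i _ => ?_
  ring

theorem dotProduct_secondMomentMatrix_mulVec (v : Fin d → ℝ) :
    v ⬝ᵥ secondMomentMatrix μ X *ᵥ v = ∫ ω, (v ⬝ᵥ X ω) ^ 2 ∂μ := by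
  have hsq : ∀ ω, (v ⬝ᵥ X ω) ^ 2 = ∑ i, ∑ j, v i * v j * (X ω i * X ω j) := fun ω => by
    rw [sq, dotProduct, Finset.sum_mul_sum]
    exact Finset.sum_congr rfl fun i _ => Finset.sum_congr rfl fun j _ => by ring
  simp only [hsq]
  rw [integral_finsetSum _ fun i _ => integrable_finsetSum _ fun j _ =>
    (h.integrable_mul_apply i j).const_mul _]
  refine Finset.sum_congr rfl fun i _ => ?_
  rw [integral_finsetSum _ fun j _ => (h.integrable_mul_apply i j).const_mul _, mulVec,
    dotProduct, Finset.mul_sum]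
  refine Finset.sum_congr rfl fun j _ => ?_
  rw [integral_const_mul, secondMomentMatrix, of_apply]
  ring

theorem lambdaMin_mul_euclNorm_sq_le_integral (v : Fin d → ℝ) :
    lambdaMin (secondMomentMatrix μ X) * euclNorm v ^ 2 ≤ ∫ ω, (v ⬝ᵥ X ω) ^ 2 ∂μ :=
  h.dotProduct_secondMomentMatrix_mulVec v ▸
    lambdaMin_mul_euclNorm_sq_le secondMomentMatrix_isHermitian v

theorem integrable_logisticLoss_sub_sub (θ₁ θ₂ : Fin d → ℝ) :
    Integrable (fun ω => logisticLoss (y ω * (θ₂ ⬝ᵥ X ω)) - logisticLoss (y ω * (θ₁ ⬝ᵥ X ω))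
      - (sigmoid (y ω * (θ₁ ⬝ᵥ X ω)) - 1) * (y ω * ((θ₂ - θ₁) ⬝ᵥ X ω))) μ :=
  ((h.integrable_logisticLoss θ₂).sub (h.integrable_logisticLoss θ₁)).sub
    (h.integrable_sigmoid_sub_one_mul θ₁ (θ₂ - θ₁))

theorem logisticRisk_sub_sub_grad_dotProduct (θ₁ θ₂ : Fin d → ℝ) :
    logisticRisk μ X y θ₂ - logisticRisk μ X y θ₁ - logisticGrad μ X y θ₁ ⬝ᵥ (θ₂ - θ₁)
      = ∫ ω, (logisticLoss (y ω * (θ₂ ⬝ᵥ X ω)) - logisticLoss (y ω * (θ₁ ⬝ᵥ X ω))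
          - (sigmoid (y ω * (θ₁ ⬝ᵥ X ω)) - 1) * (y ω * ((θ₂ - θ₁) ⬝ᵥ X ω))) ∂μ := by
  have hloss : Integrable (fun ω => logisticLoss (y ω * (θ₂ ⬝ᵥ X ω))
      - logisticLoss (y ω * (θ₁ ⬝ᵥ X ω))) μ :=
    (h.integrable_logisticLoss θ₂).sub (h.integrable_logisticLoss θ₁)
  rw [integral_sub hloss (h.integrable_sigmoid_sub_one_mul θ₁ (θ₂ - θ₁)),
    integral_sub (h.integrable_logisticLoss θ₂) (h.integrable_logisticLoss θ₁),
    h.logisticGrad_dotProduct, logisticRisk, logisticRisk]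

theorem logisticRisk_add_grad_dotProduct_le (θ₁ θ₂ : Fin d → ℝ) :
    logisticRisk μ X y θ₁ + logisticGrad μ X y θ₁ ⬝ᵥ (θ₂ - θ₁) ≤ logisticRisk μ X y θ₂ := by
  have hrem := h.logisticRisk_sub_sub_grad_dotProduct θ₁ θ₂ ▸ integral_nonneg fun ω => by
    have := logisticLoss_sub_sub_nonneg (y ω * (θ₁ ⬝ᵥ X ω)) (y ω * (θ₂ ⬝ᵥ X ω))
    rwa [← mul_sub, ← sub_dotProduct] at this
  linarith

theorem logisticRisk_sub_le_mul (θ₁ θ₂ : Fin d → ℝ) :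
    logisticRisk μ X y θ₁ - logisticRisk μ X y θ₂
      ≤ euclNorm (logisticGrad μ X y θ₁) * euclNorm (θ₁ - θ₂) := by
  have h₁ := h.logisticRisk_add_grad_dotProduct_le θ₁ θ₂
  have h₂ := (le_abs_self _).trans (_root_.abs_dotProduct_le (logisticGrad μ X y θ₁) (θ₁ - θ₂))
  rw [← neg_sub θ₁ θ₂, dotProduct_neg] at h₁
  linarith

theorem inv_four_mul_integral_le_logisticRisk_sub {r : ℝ} {θ₁ θ₂ : Fin d → ℝ}
    (hθ₁ : euclNorm θ₁ ≤ r) (hθ₂ : euclNorm θ₂ ≤ r) :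
    (4 * (1 + exp (D * r)))⁻¹ * ∫ ω, ((θ₂ - θ₁) ⬝ᵥ X ω) ^ 2 ∂μ
      ≤ logisticRisk μ X y θ₂ - logisticRisk μ X y θ₁ - logisticGrad μ X y θ₁ ⬝ᵥ (θ₂ - θ₁) := by
  have hR : ∀ θ, euclNorm θ ≤ r → ∀ᵐ ω ∂μ, |y ω * (θ ⬝ᵥ X ω)| ≤ D * r := fun θ hθ => by
    filter_upwards [h.abs_y, h.abs_dotProduct_le θ, h.euclNorm_X_le] with ω hy hθX hX
    rw [abs_mul, hy, one_mul]
    nlinarith [euclNorm_nonneg θ, euclNorm_nonneg (X ω)]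
  rw [h.logisticRisk_sub_sub_grad_dotProduct, ← integral_const_mul]
  refine integral_mono_ae ((h.integrable_dotProduct_sq _).const_mul _)
    (h.integrable_logisticLoss_sub_sub θ₁ θ₂) ?_
  filter_upwards [h.abs_y, hR θ₁ hθ₁, hR θ₂ hθ₂] with ω hy h₁ h₂
  have := le_logisticLoss_sub_sub h₁ h₂
  rwa [← mul_sub, ← sub_dotProduct, mul_pow, ← sq_abs (y ω), hy, one_pow, one_mul] at this

theorem convexOn_logisticRisk : ConvexOn ℝ univ (logisticRisk μ X y) := by
  refine ⟨convex_univ, fun θ₁ _ θ₂ _ a b ha hb hab => ?_⟩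
  have hint := h.integrable_logisticLoss
  simp only [logisticRisk, smul_eq_mul, ← integral_const_mul]
  rw [← integral_add ((hint θ₁).const_mul a) ((hint θ₂).const_mul b)]
  refine integral_mono (hint _) (((hint θ₁).const_mul a).add ((hint θ₂).const_mul b)) fun ω => ?_
  have := convexOn_logisticLoss.2 (mem_univ (y ω * (θ₁ ⬝ᵥ X ω))) (mem_univ (y ω * (θ₂ ⬝ᵥ X ω)))
    ha hb hab
  simp only [smul_eq_mul] at this
  convert this using 2
  rw [add_dotProduct, smul_dotProduct, smul_dotProduct, smul_eq_mul, smul_eq_mul]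
  ring

theorem logisticRisk_quadratic_growth {θ₀ : Fin d → ℝ} (hgrad : logisticGrad μ X y θ₀ = 0)
    {ρ : ℝ} {θ : Fin d → ℝ} (hθ : euclNorm (θ - θ₀) ≤ ρ) :
    lambdaMin (secondMomentMatrix μ X) / (4 * (1 + exp (D * (euclNorm θ₀ + ρ))))
        * euclNorm (θ - θ₀) ^ 2
      ≤ logisticRisk μ X y θ - logisticRisk μ X y θ₀ := by
  have hθ₀ : euclNorm θ₀ ≤ euclNorm θ₀ + ρ :=
    le_add_of_nonneg_right ((euclNorm_nonneg _).trans hθ)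
  have hθr : euclNorm θ ≤ euclNorm θ₀ + ρ := by
    calc euclNorm θ = euclNorm (θ₀ + (θ - θ₀)) := by rw [add_sub_cancel]
      _ ≤ euclNorm θ₀ + ρ := (euclNorm_add_le _ _).trans (add_le_add_right hθ _)
  have hstrong := h.inv_four_mul_integral_le_logisticRisk_sub hθ₀ hθr
  rw [hgrad, zero_dotProduct, sub_zero] at hstrong
  calc _ = (4 * (1 + exp (D * (euclNorm θ₀ + ρ))))⁻¹
        * (lambdaMin (secondMomentMatrix μ X) * euclNorm (θ - θ₀) ^ 2) := by ring
    _ ≤ _ := by gcongr; exact h.lambdaMin_mul_euclNorm_sq_le_integral _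
    _ ≤ _ := hstrong

end FiniteMeasure

variable [IsProbabilityMeasure μ]

theorem integral_dotProduct_sq_le (v : Fin d → ℝ) :
    ∫ ω, (v ⬝ᵥ X ω) ^ 2 ∂μ ≤ D ^ 2 * euclNorm v ^ 2 := by
  have hbound : ∀ᵐ ω ∂μ, (v ⬝ᵥ X ω) ^ 2 ≤ D ^ 2 * euclNorm v ^ 2 := by
    filter_upwards [h.abs_dotProduct_le v] with ω hv
    rw [← sq_abs, ← mul_pow, mul_comm]
    exact pow_le_pow_left₀ (abs_nonneg _) hv 2
  simpa using integral_mono_ae (h.integrable_dotProduct_sq v) (integrable_const _) hbound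

theorem logisticRisk_le_add_grad_dotProduct_add (θ₁ θ₂ : Fin d → ℝ) :
    logisticRisk μ X y θ₂
      ≤ logisticRisk μ X y θ₁ + logisticGrad μ X y θ₁ ⬝ᵥ (θ₂ - θ₁)
        + D ^ 2 / 8 * euclNorm (θ₂ - θ₁) ^ 2 := by
  have hrem : logisticRisk μ X y θ₂ - logisticRisk μ X y θ₁ - logisticGrad μ X y θ₁ ⬝ᵥ (θ₂ - θ₁)
      ≤ ∫ ω, ((θ₂ - θ₁) ⬝ᵥ X ω) ^ 2 / 8 ∂μ := by
    rw [h.logisticRisk_sub_sub_grad_dotProduct]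
    refine integral_mono_ae (h.integrable_logisticLoss_sub_sub θ₁ θ₂)
      ((h.integrable_dotProduct_sq _).div_const _) ?_
    filter_upwards [h.abs_y] with ω hy
    have := logisticLoss_sub_sub_le (y ω * (θ₁ ⬝ᵥ X ω)) (y ω * (θ₂ ⬝ᵥ X ω))
    rwa [← mul_sub, ← sub_dotProduct, mul_pow, ← sq_abs (y ω), hy, one_pow, one_mul] at this
  rw [integral_div] at hrem
  linarith [h.integral_dotProduct_sq_le (θ₂ - θ₁)]

theorem lambdaMin_secondMomentMatrix_le : lambdaMin (secondMomentMatrix μ X) ≤ D ^ 2 := by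
  rcases isEmpty_or_nonempty (Fin d) with _ | ⟨⟨i⟩⟩
  · have hempty : {r : ℝ | ∃ v : Fin d → ℝ, v ≠ 0 ∧ secondMomentMatrix μ X *ᵥ v = r • v} = ∅ :=
      Set.eq_empty_of_forall_notMem fun r ⟨v, hv, _⟩ => hv (Subsingleton.elim _ _)
    rw [lambdaMin, hempty, Real.sInf_empty]
    positivity
  · have he : euclNorm (Pi.single i 1 : Fin d → ℝ) = 1 := by
      simp [euclNorm_eq_norm]
    simpa [he] using (h.lambdaMin_mul_euclNorm_sq_le_integral (Pi.single i 1)).trans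
      (h.integral_dotProduct_sq_le _)

theorem logisticGrad_eq_zero_of_forall_le {θ₀ : Fin d → ℝ}
    (hmin : ∀ θ, logisticRisk μ X y θ₀ ≤ logisticRisk μ X y θ) : logisticGrad μ X y θ₀ = 0 :=
  eq_zero_of_forall_le_add_dotProduct_add_mul (by positivity) hmin
    (h.logisticRisk_le_add_grad_dotProduct_add θ₀)

end LogisticSetting

end LogisticRegression

theorem logistic_gradient_lower_bound_general
    {Ω : Type*} [MeasurableSpace Ω] (μ : Measure Ω) [IsProbabilityMeasure μ]
    {d : ℕ}
    (X : Ω → Fin d → ℝ) (y : Ω → ℝ) (hXmeas : Measurable X) (hymeas : Measurable y)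
    (hy : ∀ᵐ ω ∂μ, y ω = 1 ∨ y ω = -1)
    (DX : ℝ) (hDX : 0 < DX) (hXbdd : ∀ᵐ ω ∂μ, euclNorm (X ω) ≤ DX)
    (Λmin : ℝ) (hΛ : Λmin = lambdaMin (Matrix.of fun i j => ∫ ω, X ω i * X ω j ∂μ))
    (hΛpos : 0 < Λmin)
    (L : (Fin d → ℝ) → ℝ)
    (hL : ∀ θ, L θ = ∫ ω, Real.log (1 + Real.exp (-(y ω) * (θ ⬝ᵥ X ω))) ∂μ)
    (θstar : Fin d → ℝ) (hmin : ∀ θ, L θstar ≤ L θ)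
    (η : ℝ) (hη : 0 < η) (θ : Fin d → ℝ) (hgap : η < L θ - L θstar) :
    Λmin * Real.sqrt η /
        (Real.sqrt 2 * DX *
          (1 + Real.exp (DX * (euclNorm θstar + Real.sqrt (8 * η / DX ^ 2)))))
      ≤ euclNorm (fun i => ∫ ω, -(y ω) * X ω i / (1 + Real.exp (y ω * (θ ⬝ᵥ X ω))) ∂μ) := by
  have h : LogisticSetting μ X y DX :=
    ⟨hXmeas, hymeas, hy.mono fun _ hω => (abs_eq zero_le_one).2 hω, hXbdd⟩
  obtain rfl : L = logisticRisk μ X y :=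
    funext fun θ => by simp only [hL, logisticRisk, logisticLoss, neg_mul]
  obtain rfl : Λmin = lambdaMin (secondMomentMatrix μ X) := hΛ
  change _ ≤ euclNorm (logisticGrad μ X y θ)
  set ρ := √(8 * η / DX ^ 2)
  have hρ : 0 < ρ := by positivity
  have hκ : 2 ≤ 1 + exp (DX * (euclNorm θstar + ρ)) := by
    linarith [one_le_exp (mul_nonneg hDX.le (add_nonneg (euclNorm_nonneg θstar) hρ.le))]
  have hne : θ - θstar ≠ 0 := fun h0 => by
    rw [sub_eq_zero.1 h0, sub_self] at hgap
    linarith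
  have hlower := h.convexOn_logisticRisk.mul_min_mul_le_sub hρ
    (fun _ => h.logisticRisk_quadratic_growth (h.logisticGrad_eq_zero_of_forall_le hmin)) θ
  exact (div_le_min_mul_sqrt hΛpos.le h.lambdaMin_secondMomentMatrix_le hDX hκ hη.le).trans
    (min_mul_sqrt_le (by positivity) (euclNorm_pos hne)
      (hgap.le.trans (h.logisticRisk_sub_le_mul θ θstar))
      (hlower.trans (h.logisticRisk_sub_le_mul θ θstar)))

/-- **Lemma (lower bound on the gradient norm from the excess risk, logistic setting).**
If `L(θ) − L(θ*) > η` then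
`‖∇L(θ)‖ ≥ Λ_min √η / (√2 D_X (1 + e^{D_X(‖θ*‖ + √(8η/D_X²))}))`, where
`∇L(θ) = E[−yX/(1 + e^{yθᵀX})]`. -/
theorem logistic_gradient_lower_bound
    {Ω : Type*} [MeasurableSpace Ω] (μ : Measure Ω) [IsProbabilityMeasure μ]
    {d : ℕ} (hd : 1 ≤ d)
    (X : Ω → Fin d → ℝ) (y : Ω → ℝ) (hXmeas : Measurable X) (hymeas : Measurable y)
    (hy : ∀ᵐ ω ∂μ, y ω = 1 ∨ y ω = -1)
    (DX : ℝ) (hDX : 0 < DX) (hXbdd : ∀ᵐ ω ∂μ, euclNorm (X ω) ≤ DX)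
    (Λmin : ℝ) (hΛ : Λmin = lambdaMin (Matrix.of fun i j => ∫ ω, X ω i * X ω j ∂μ))
    (hΛpos : 0 < Λmin)
    (L : (Fin d → ℝ) → ℝ)
    (hL : ∀ θ, L θ = ∫ ω, Real.log (1 + Real.exp (-(y ω) * (θ ⬝ᵥ X ω))) ∂μ)
    (θstar : Fin d → ℝ) (hmin : ∀ θ, L θstar ≤ L θ)
    (η : ℝ) (hη : 0 < η) (θ : Fin d → ℝ) (hgap : η < L θ - L θstar) :
    Λmin * Real.sqrt η /
        (Real.sqrt 2 * DX *
          (1 + Real.exp (DX * (euclNorm θstar + Real.sqrt (8 * η / DX ^ 2)))))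
      ≤ euclNorm (fun i => ∫ ω, -(y ω) * X ω i / (1 + Real.exp (y ω * (θ ⬝ᵥ X ω))) ∂μ) :=
  logistic_gradient_lower_bound_general μ X y hXmeas hymeas hy DX hDX hXbdd Λmin hΛ hΛpos L hL θstar
    hmin η hη θ hgap
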